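/- arXiv:1305.3940 — 8 statements merged into one kernel-verified Lean document; each statement's English description precedes it below -/
import Mathlib

section
/- Let b ∈ ℂ and consider the sextic polynomial f(x) = ((1-b)/3 + (2/3)(1-b)·x + x²) · ((b-4)·b/12 + ((b-4)/3)·x + x²) · (b - (2/3)(b+2)·x + x²) in ℂ[x]. Then f is squarefree (equivalently, f has no repeated complex roots) if and only if b·(b-4)·(b-2)·(b-1)·(b+2) ≠ 0. -/
/-!
The sextic is the product of three monic quadratics, so it is squarefree iff each factor has
nonzero discriminant and the factors are pairwise coprime, i.e. have nonzero pairwise resultants.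
The discriminants are `4/9 (b-1)(b+2)`, `-2/9 (b-4)(b+2)`, `4/9 (b-1)(b-4)` and the resultants
`(b-2)⁴/16`, `1`, `b⁴/16`.
-/

open Polynomial

section MonicQuadratic

variable {K : Type*} [Field K]

noncomputable def monicQuadratic (p c : K) : K[X] := X ^ 2 + C p * X + C c

/-- The resultant of `X² + pX + c` and `X² + p'X + c'`: with `δ = p - p'` and `ε = c - c'`, it is
`δ²` times the value of the first quadratic at the root `-ε/δ` of their difference `δX + ε`. -/
def quadraticResultant (p c p' c' : K) : K :=
  (c - c') ^ 2 - p * (c - c') * (p - p') + c * (p - p') ^ 2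

lemma isCoprime_of_mul_add_mul_eq_C {a b u v : K[X]} {r : K} (hr : r ≠ 0)
    (h : u * a + v * b = C r) : IsCoprime a b :=
  ⟨C r⁻¹ * u, C r⁻¹ * v, by
    rw [mul_assoc, mul_assoc, ← mul_add, h, ← C_mul, inv_mul_cancel₀ hr, C_1]⟩

lemma C_add_C_mul_X_add_X_sq (p c : K) : C c + C p * X + X ^ 2 = monicQuadratic p c := by
  unfold monicQuadratic; ring

lemma natDegree_monicQuadratic (p c : K) : (monicQuadratic p c).natDegree = 2 := by
  unfold monicQuadratic; compute_degree!

lemma not_isUnit_monicQuadratic (p c : K) : ¬IsUnit (monicQuadratic p c) := fun h => by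
  simpa [natDegree_monicQuadratic] using natDegree_eq_zero_of_isUnit h

lemma derivative_monicQuadratic (p c : K) : derivative (monicQuadratic p c) = 2 * X + C p := by
  simp [monicQuadratic, one_add_one_eq_two, map_ofNat]

lemma separable_monicQuadratic (p c : K) (h : discrim 1 p c ≠ 0) :
    Separable (monicQuadratic p c) := by
  rw [separable_def, derivative_monicQuadratic]
  refine isCoprime_of_mul_add_mul_eq_C h (u := -4) (v := 2 * X + C p) ?_
  simp only [monicQuadratic, discrim, map_sub, map_mul, map_pow, map_ofNat, mul_one]
  ring

lemma not_squarefree_monicQuadratic [NeZero (2 : K)] (p c : K) (h : discrim 1 p c = 0) :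
    ¬Squarefree (monicQuadratic p c) := by
  obtain ⟨s, rfl⟩ : ∃ s, p = 2 * s := ⟨p / 2, (mul_div_cancel₀ p two_ne_zero).symm⟩
  obtain rfl : c = s ^ 2 := by
    apply mul_left_cancel₀ (mul_ne_zero (two_ne_zero' K) (two_ne_zero' K))
    unfold discrim at h
    linear_combination -h
  have hsquare : monicQuadratic (2 * s) (s ^ 2) = (X - C (-s)) * (X - C (-s)) := by
    simp only [monicQuadratic, map_neg, map_mul, map_pow, map_ofNat]
    ring
  exact fun hsf => not_isUnit_X_sub_C (-s) (hsf _ hsquare.symm.dvd)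

lemma squarefree_monicQuadratic_iff [NeZero (2 : K)] (p c : K) :
    Squarefree (monicQuadratic p c) ↔ discrim 1 p c ≠ 0 :=
  ⟨fun hsq h => not_squarefree_monicQuadratic p c h hsq,
    fun h => (separable_monicQuadratic p c h).squarefree⟩

lemma C_quadraticResultant_eq (p c p' c' : K) :
    C (quadraticResultant p c p' c') =
      (C ((p - p') ^ 2 - (p - p') * p + (c - c')) - C (p - p') * X) * monicQuadratic p c +
        (C (p - p') * X + C ((p - p') * p - (c - c'))) * monicQuadratic p' c' := by
  simp only [quadraticResultant, monicQuadratic, map_sub, map_add, map_mul, map_pow]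
  ring

lemma isCoprime_monicQuadratic (p c p' c' : K) (h : quadraticResultant p c p' c' ≠ 0) :
    IsCoprime (monicQuadratic p c) (monicQuadratic p' c') :=
  isCoprime_of_mul_add_mul_eq_C h (C_quadraticResultant_eq p c p' c').symm

lemma not_isRelPrime_monicQuadratic (p c p' c' : K) (h : quadraticResultant p c p' c' = 0) :
    ¬IsRelPrime (monicQuadratic p c) (monicQuadratic p' c') := by
  intro hrel
  unfold quadraticResultant at h
  by_cases hδ : p - p' = 0
  · have hε : c - c' = 0 := by simpa [hδ] using h
    rw [sub_eq_zero] at hδ hε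
    subst hδ hε
    exact not_isUnit_monicQuadratic p c (hrel dvd_rfl dvd_rfl)
  · set r := -(c - c') / (p - p')
    have hroot : (monicQuadratic p c).IsRoot r := by
      simp only [IsRoot, monicQuadratic, eval_add, eval_mul, eval_pow, eval_C, eval_X, r]
      field_simp
      linear_combination h
    have hroot' : (monicQuadratic p' c').IsRoot r := by
      simp only [IsRoot, monicQuadratic, eval_add, eval_mul, eval_pow, eval_C, eval_X, r]
      field_simp
      linear_combination h
    exact not_isUnit_X_sub_C r (hrel (dvd_iff_isRoot.2 hroot) (dvd_iff_isRoot.2 hroot'))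

lemma isRelPrime_monicQuadratic_iff (p c p' c' : K) :
    IsRelPrime (monicQuadratic p c) (monicQuadratic p' c') ↔ quadraticResultant p c p' c' ≠ 0 :=
  ⟨fun hrel h => not_isRelPrime_monicQuadratic p c p' c' h hrel,
    fun h => (isCoprime_monicQuadratic p c p' c' h).isRelPrime⟩

end MonicQuadratic

/-- The sextic `f(x) = ((1-b)/3 + (2/3)(1-b)x + x²)((b-4)b/12 + ((b-4)/3)x + x²)(b - (2/3)(b+2)x + x²)`
is squarefree iff `b(b-4)(b-2)(b-1)(b+2) ≠ 0`. -/
theorem stmt_0 (b : ℂ) :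
    Squarefree ((C ((1 - b) / 3) + C (2 / 3 * (1 - b)) * X + X ^ 2) *
        (C ((b - 4) * b / 12) + C ((b - 4) / 3) * X + X ^ 2) *
        (C b - C (2 / 3 * (b + 2)) * X + X ^ 2) : ℂ[X]) ↔
      b * (b - 4) * (b - 2) * (b - 1) * (b + 2) ≠ 0 := by
  rw [sub_eq_add_neg (C b), ← neg_mul, ← map_neg]
  simp only [C_add_C_mul_X_add_X_sq]
  rw [squarefree_mul_iff, squarefree_mul_iff, IsRelPrime.mul_left_iff,
    squarefree_monicQuadratic_iff, squarefree_monicQuadratic_iff, squarefree_monicQuadratic_iff,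
    isRelPrime_monicQuadratic_iff, isRelPrime_monicQuadratic_iff, isRelPrime_monicQuadratic_iff]
  have disc₁ : discrim 1 (2 / 3 * (1 - b)) ((1 - b) / 3) = 4 / 9 * ((b - 1) * (b + 2)) := by
    unfold discrim; ring
  have disc₂ : discrim 1 ((b - 4) / 3) ((b - 4) * b / 12) = -2 / 9 * ((b - 4) * (b + 2)) := by
    unfold discrim; ring
  have disc₃ : discrim 1 (-(2 / 3 * (b + 2))) b = 4 / 9 * ((b - 1) * (b - 4)) := by
    unfold discrim; ring
  have res₁₂ : quadraticResultant (2 / 3 * (1 - b)) ((1 - b) / 3) ((b - 4) / 3) ((b - 4) * b / 12)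
      = (b - 2) ^ 4 / 16 := by
    unfold quadraticResultant; ring
  have res₁₃ : quadraticResultant (2 / 3 * (1 - b)) ((1 - b) / 3) (-(2 / 3 * (b + 2))) b = 1 := by
    unfold quadraticResultant; ring
  have res₂₃ : quadraticResultant ((b - 4) / 3) ((b - 4) * b / 12) (-(2 / 3 * (b + 2))) b
      = b ^ 4 / 16 := by
    unfold quadraticResultant; ring
  rw [disc₁, disc₂, disc₃, res₁₂, res₁₃, res₂₃]
  norm_num [sub_eq_zero]
  tauto
end

section
/- There exist permutations σ₁, σ₂, σ₃, σ₄, σ₅ in the symmetric group S₈ on 8 letters such that: σ₁, σ₂, σ₃ each have cycle type {2,2,2} (a product of three disjoint transpositions), σ₄ has cycle type {2,2,2,2} (a product of four disjoint transpositions), σ₅ has cycle type {2} (a single transposition), σ₁σ₂σ₃σ₄σ₅ = 1, and σ₁, σ₂, σ₃, σ₄, σ₅ generate the full symmetric group S₈. -/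
/-!
Take the reflections `ρ₀ : i ↦ -i` and `ρ₁ : i ↦ 1 - i` of `Fin 8 = ℤ/8`, the transposition
`τ = (0 1)`, and the tuple `(ρ₀, ρ₀, τ ρ₁, ρ₁, τ)`. Since `ρ₁ = τ · (2 7)(3 6)(4 5)` with disjoint
factors, all five are involutions, so their cycle types are read off their supports, and the
product is `1` because each factor is its own inverse. Finally `ρ₁ ρ₀ = i ↦ i + 1` is an
`8`-cycle, which together with the adjacent transposition `τ` generates `S₈`.
-/

open Equiv Equiv.Perm Finset

theorem Equiv.Perm.cycleType_eq_replicate_of_pow_prime_eq_one {α : Type*} [Fintype α]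
    [DecidableEq α] {σ : Perm α} {p k : ℕ} [Fact p.Prime] (hσ : σ ^ p = 1)
    (hsupport : #σ.support = p * k) : σ.cycleType = Multiset.replicate k p := by
  have hσ' := cycleType_of_pow_prime_eq_one hσ
  have hsum := σ.sum_cycleType
  rw [hσ', Multiset.sum_replicate, smul_eq_mul, hsupport, mul_comm] at hsum
  rwa [Nat.eq_of_mul_eq_mul_left (Fact.out : p.Prime).pos hsum] at hσ'

theorem Equiv.Perm.closure_finRotate_swap_zero_one (n : ℕ) :
    Subgroup.closure ({finRotate (n + 2), swap 0 1} : Set (Perm (Fin (n + 2)))) = ⊤ := by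
  simpa [finRotate_apply] using
    closure_cycle_adjacent_swap isCycle_finRotate support_finRotate (0 : Fin (n + 2))

theorem Equiv.subLeft_one_mul_neg (n : ℕ) :
    Equiv.subLeft (1 : Fin (n + 1)) * Equiv.neg (Fin (n + 1)) = finRotate (n + 1) := by
  ext i
  simp [finRotate_apply, add_comm]

/-- There is a branch-cycle tuple in `S₈` of cycle types
`(2³, 2³, 2³, 2⁴, 2)` with product one generating the full `S₈`. -/
theorem stmt_3 : ∃ σ₁ σ₂ σ₃ σ₄ σ₅ : Equiv.Perm (Fin 8),
    σ₁.cycleType = {2, 2, 2} ∧ σ₂.cycleType = {2, 2, 2} ∧ σ₃.cycleType = {2, 2, 2} ∧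
    σ₄.cycleType = {2, 2, 2, 2} ∧ σ₅.cycleType = {2} ∧
    σ₁ * σ₂ * σ₃ * σ₄ * σ₅ = 1 ∧
    Subgroup.closure ({σ₁, σ₂, σ₃, σ₄, σ₅} : Set (Equiv.Perm (Fin 8))) = ⊤ := by
  set ρ₀ : Perm (Fin 8) := Equiv.neg (Fin 8)
  set ρ₁ : Perm (Fin 8) := Equiv.subLeft 1
  have hρ₀ : ρ₀ ^ 2 = 1 := by ext i; simp [ρ₀, sq]
  have hρ₁ : ρ₁ ^ 2 = 1 := by ext i; simp [ρ₁, sq]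
  have hτ : swap (0 : Fin 8) 1 ^ 2 = 1 := by rw [sq, swap_mul_self]
  have hτρ₁ : (swap 0 1 * ρ₁) ^ 2 = 1 := by decide
  refine ⟨ρ₀, ρ₀, swap 0 1 * ρ₁, ρ₁, swap 0 1,
    cycleType_eq_replicate_of_pow_prime_eq_one (k := 3) hρ₀ (by decide),
    cycleType_eq_replicate_of_pow_prime_eq_one (k := 3) hρ₀ (by decide),
    cycleType_eq_replicate_of_pow_prime_eq_one (k := 3) hτρ₁ (by decide),
    cycleType_eq_replicate_of_pow_prime_eq_one (k := 4) hρ₁ (by decide),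
    cycleType_eq_replicate_of_pow_prime_eq_one (k := 1) hτ (by decide), ?_, ?_⟩
  · rw [sq] at hρ₀ hρ₁ hτ
    rw [hρ₀, one_mul, mul_assoc (swap 0 1), hρ₁, mul_one, hτ]
  · refine eq_top_iff.2 <|
      (closure_finRotate_swap_zero_one 6).ge.trans (Subgroup.closure_le _ |>.2 ?_)
    rw [← show ρ₁ * ρ₀ = finRotate 8 from subLeft_one_mul_neg 7, Set.insert_subset_iff,
      Set.singleton_subset_iff]
    exact ⟨mul_mem (Subgroup.subset_closure (by simp)) (Subgroup.subset_closure (by simp)),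
      Subgroup.subset_closure (by simp)⟩
end

section
/- There exist permutations σ₁, σ₂, σ₃, σ₄ in the symmetric group S₈ on 8 letters such that: σ₁ and σ₄ each have cycle type {2,2,2,2} (a product of four disjoint transpositions), σ₂ and σ₃ each have cycle type {2,2,2} (a product of three disjoint transpositions), σ₁σ₂σ₃σ₄ = 1, and the subgroup of S₈ generated by σ₁, σ₂, σ₃, σ₄ is a transitive subgroup of order 16. -/
/-!
The four permutations are reflections of the regular octagon, with vertices `ZMod 8`:
`x ↦ 1 - x` and `x ↦ 3 - x` fix no vertex (four transpositions), while `x ↦ -x` and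
`x ↦ 2 - x` fix two vertices each (three transpositions). The composite of the first two is a
rotation by one step, so together they generate the whole dihedral group of order 16, which acts
faithfully and transitively on the vertices; the product of the four reflections is a rotation
by `1 - 0 + 2 - 3 ≡ 0`, i.e. trivial.
-/

open Equiv Subgroup

namespace Equiv.Perm

variable {α : Type*} [Fintype α] [DecidableEq α]

theorem cycleType_eq_replicate_of_pow_prime_eq_one_s4 {σ : Perm α} {p : ℕ} [hp : Fact p.Prime]
    (hσ : σ ^ p = 1) : σ.cycleType = Multiset.replicate (σ.support.card / p) p := by
  have h := cycleType_of_pow_prime_eq_one hσ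
  have hsum : σ.cycleType.card * p = σ.support.card := by
    rw [← sum_cycleType, h, Multiset.sum_replicate, smul_eq_mul, Multiset.card_replicate]
  rwa [← hsum, Nat.mul_div_cancel _ hp.out.pos]

end Equiv.Perm

namespace DihedralGroup

variable {n : ℕ}

/-- Rotations act by subtraction so that Mathlib's convention `sr i * sr j = r (j - i)` is
respected. -/
def toPerm (n : ℕ) : DihedralGroup n →* Perm (ZMod n) where
  toFun
    | r i => Equiv.subRight i
    | sr i => Equiv.subLeft i
  map_one' := by ext x; exact sub_zero x
  map_mul' := by
    rintro (i | i) (j | j) <;> ext x <;> simp <;> abel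

@[simp] theorem toPerm_r_apply (i x : ZMod n) : toPerm n (r i) x = x - i := rfl

@[simp] theorem toPerm_sr_apply (i x : ZMod n) : toPerm n (sr i) x = i - x := rfl

theorem toPerm_injective (hn : 2 < n) : Function.Injective (toPerm n) := by
  rw [injective_iff_map_eq_one]
  rintro (i | i) h
  · have hi : i = 0 := by simpa using congr($h 0)
    rw [hi, r_zero]
  · have h0 : i - 0 = 0 := congr($h 0)
    have h1 : i - 1 = 1 := congr($h 1)
    have h2 : ((2 : ℕ) : ZMod n) = 0 := by push_cast; linear_combination h0 - h1
    have := Nat.le_of_dvd two_pos ((ZMod.natCast_eq_zero_iff 2 n).1 h2)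
    omega

theorem card_range_toPerm (hn : 2 < n) : Nat.card (toPerm n).range = 2 * n := by
  rw [MonoidHom.range_eq_map, card_map_of_injective (toPerm_injective hn), card_top, nat_card]

theorem exists_mem_range_toPerm_apply_eq (a b : ZMod n) : ∃ g ∈ (toPerm n).range, g a = b :=
  ⟨toPerm n (r (a - b)), ⟨r (a - b), rfl⟩, by simp⟩

theorem toPerm_sr_sq (i : ZMod n) : toPerm n (sr i) ^ 2 = 1 := by
  rw [← map_pow, sq, sr_mul_self, map_one]

theorem cycleType_toPerm_sr [NeZero n] (i : ZMod n) :
    (toPerm n (sr i)).cycleType = Multiset.replicate ((toPerm n (sr i)).support.card / 2) 2 :=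
  have : Fact (Nat.Prime 2) := ⟨Nat.prime_two⟩
  Perm.cycleType_eq_replicate_of_pow_prime_eq_one_s4 (toPerm_sr_sq i)

theorem closure_sr_zero_sr_one : closure ({sr 0, sr 1} : Set (DihedralGroup n)) = ⊤ := by
  set H := closure ({sr 0, sr 1} : Set (DihedralGroup n))
  have h0 : sr 0 ∈ H := subset_closure (by simp)
  have hr : ∀ i, r i ∈ H := by
    intro i
    have h1 : r 1 ∈ H := by
      simpa [sr_mul_sr] using mul_mem h0 (subset_closure (by simp) : sr 1 ∈ H)
    rw [← ZMod.intCast_zmod_cast i, ← r_one_zpow]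
    exact zpow_mem h1 _
  refine eq_top_iff.2 fun g _ => ?_
  rcases g with i | i
  · exact hr i
  · simpa [sr_mul_r] using mul_mem h0 (hr i)

theorem closure_image_toPerm {s : Set (DihedralGroup n)} (hs : closure s = ⊤) :
    closure (toPerm n '' s) = (toPerm n).range := by
  rw [← MonoidHom.map_closure, hs, MonoidHom.range_eq_map]

end DihedralGroup

open DihedralGroup

/-- There is a branch-cycle tuple in `S₈` of cycle types `(2⁴, 2³, 2³, 2⁴)`
with product one generating a transitive subgroup of order 16. -/
theorem stmt_4 : ∃ σ₁ σ₂ σ₃ σ₄ : Equiv.Perm (Fin 8),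
    σ₁.cycleType = {2, 2, 2, 2} ∧ σ₂.cycleType = {2, 2, 2} ∧ σ₃.cycleType = {2, 2, 2} ∧
    σ₄.cycleType = {2, 2, 2, 2} ∧
    σ₁ * σ₂ * σ₃ * σ₄ = 1 ∧
    (∀ a b : Fin 8,
      ∃ g ∈ Subgroup.closure ({σ₁, σ₂, σ₃, σ₄} : Set (Equiv.Perm (Fin 8))), g a = b) ∧
    Nat.card (Subgroup.closure ({σ₁, σ₂, σ₃, σ₄} : Set (Equiv.Perm (Fin 8)))) = 16 := by
  have hgen : closure ({sr 1, sr 0, sr 2, sr 3} : Set (DihedralGroup 8)) = ⊤ := by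
    rw [eq_top_iff, ← closure_sr_zero_sr_one]
    exact closure_mono (by simp [Set.insert_subset_iff])
  -- `ZMod 8` is `Fin 8` only up to unfolding, so the closure is stated over `Fin 8` for the goals.
  have hC : closure ({toPerm 8 (sr 1), toPerm 8 (sr 0), toPerm 8 (sr 2), toPerm 8 (sr 3)} :
      Set (Perm (Fin 8))) = (toPerm 8).range := by
    have h := closure_image_toPerm hgen
    simp only [Set.image_insert_eq, Set.image_singleton] at h
    exact h
  have hprod : sr 1 * sr 0 * sr 2 * sr 3 = (1 : DihedralGroup 8) := by decide
  refine ⟨toPerm 8 (sr 1), toPerm 8 (sr 0), toPerm 8 (sr 2), toPerm 8 (sr 3),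
    (cycleType_toPerm_sr 1).trans (by decide), (cycleType_toPerm_sr 0).trans (by decide),
    (cycleType_toPerm_sr 2).trans (by decide), (cycleType_toPerm_sr 3).trans (by decide), ?_, ?_, ?_⟩
  · have h := congrArg (toPerm 8) hprod
    simp only [map_mul, map_one] at h
    exact h
  · intro a b
    obtain ⟨g, hg, hgab⟩ := exists_mem_range_toPerm_apply_eq (n := 8) a b
    exact ⟨g, hC.ge hg, hgab⟩
  · exact (congrArg (fun H : Subgroup (Perm (Fin 8)) => Nat.card H) hC).trans
      (card_range_toPerm (n := 8) (by norm_num))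
end

section
/- There exist permutations σ₁, σ₂, σ₃, σ₄ in the symmetric group S₈ on 8 letters such that: σ₁ and σ₂ each have cycle type {2,2,2} (a product of three disjoint transpositions), σ₃ has cycle type {4,2} (a 4-cycle times a disjoint transposition), σ₄ has cycle type {2,2,2,2} (a product of four disjoint transpositions), σ₁σ₂σ₃σ₄ = 1, and σ₁, σ₂, σ₃, σ₄ generate the full symmetric group S₈. -/
/-!
Take σ₁ = (0 6)(1 5)(2 4), σ₂ = (1 2)(3 6)(4 5), σ₃ = (0 2 6 7)(3 5), σ₄ = (0 5)(1 4)(2 3)(6 7).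
Their cycle types are read off these disjoint cycle decompositions. For generation, σ₂σ₃ is the
8-cycle (0 1 ⋯ 7) and (σ₁σ₃)³ is the transposition (6 7) of two of its consecutive points; an
n-cycle together with such a transposition generates Sₙ.
-/

open Equiv Equiv.Perm Finset

namespace Equiv.Perm

variable {α : Type*} [DecidableEq α]

def ofCycles (ls : List (List α)) : Perm α :=
  (ls.map List.formPerm).prod

theorem cycleType_ofCycles [Fintype α] {ls : List (List α)} (hflat : ls.flatten.Nodup)
    (hlen : ∀ l ∈ ls, 2 ≤ l.length) : (ofCycles ls).cycleType = ls.map List.length := by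
  obtain ⟨hnodup, hdisj⟩ := List.nodup_flatten.mp hflat
  rw [ofCycles, cycleType_eq _ rfl]
  · rw [List.map_map]
    refine congrArg _ (List.map_congr_left fun l hl => ?_)
    have hsingle : ∀ x, l ≠ [x] := by
      rintro x rfl
      simpa using hlen _ hl
    change #l.formPerm.support = l.length
    rw [List.support_formPerm_of_nodup l (hnodup l hl) hsingle,
      List.toFinset_card_of_nodup (hnodup l hl)]
  · simpa using fun l hl => List.isCycle_formPerm (hnodup l hl) (hlen l hl)
  · rw [List.pairwise_map]
    refine hdisj.imp_of_mem fun hl hl' hll' => ?_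
    rwa [List.formPerm_disjoint_iff (hnodup _ hl) (hnodup _ hl') (hlen _ hl) (hlen _ hl')]

theorem subgroup_eq_top_of_finRotate_mem {n : ℕ} {H : Subgroup (Perm (Fin (n + 2)))}
    (hrot : finRotate (n + 2) ∈ H) {i : Fin (n + 2)} (hswap : swap i (finRotate (n + 2) i) ∈ H) :
    H = ⊤ := by
  rw [eq_top_iff, ← closure_cycle_adjacent_swap isCycle_finRotate support_finRotate i,
    Subgroup.closure_le]
  rintro g (rfl | rfl)
  exacts [hrot, hswap]

end Equiv.Perm

private def σ₁ : Perm (Fin 8) := ofCycles [[0, 6], [1, 5], [2, 4]]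
private def σ₂ : Perm (Fin 8) := ofCycles [[1, 2], [3, 6], [4, 5]]
private def σ₃ : Perm (Fin 8) := ofCycles [[0, 2, 6, 7], [3, 5]]
private def σ₄ : Perm (Fin 8) := ofCycles [[0, 5], [1, 4], [2, 3], [6, 7]]

set_option maxRecDepth 10000 in
private theorem closure_σ_eq_top :
    Subgroup.closure ({σ₁, σ₂, σ₃, σ₄} : Set (Perm (Fin 8))) = ⊤ := by
  have hrot : finRotate 8 = σ₂ * σ₃ := by decide
  have hswap : swap 6 (finRotate 8 6) = (σ₁ * σ₃) ^ 3 := by decide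
  refine subgroup_eq_top_of_finRotate_mem (n := 6) ?_ (i := 6) ?_
  · rw [hrot]
    exact mul_mem (Subgroup.subset_closure (by simp)) (Subgroup.subset_closure (by simp))
  · rw [hswap]
    exact pow_mem (mul_mem (Subgroup.subset_closure (by simp))
      (Subgroup.subset_closure (by simp))) 3

/-- There is a branch-cycle tuple in `S₈` of cycle types `(2³, 2³, (4)(2), 2⁴)`
with product one generating the full `S₈`. -/
theorem stmt_5 : ∃ σ₁ σ₂ σ₃ σ₄ : Equiv.Perm (Fin 8),
    σ₁.cycleType = {2, 2, 2} ∧ σ₂.cycleType = {2, 2, 2} ∧ σ₃.cycleType = {4, 2} ∧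
    σ₄.cycleType = {2, 2, 2, 2} ∧
    σ₁ * σ₂ * σ₃ * σ₄ = 1 ∧
    Subgroup.closure ({σ₁, σ₂, σ₃, σ₄} : Set (Equiv.Perm (Fin 8))) = ⊤ := by
  refine ⟨σ₁, σ₂, σ₃, σ₄, ?_, ?_, ?_, ?_, by decide, closure_σ_eq_top⟩ <;>
    exact cycleType_ofCycles (by decide) (by decide)
end

section
/- For every even integer n ≥ 4, there exist permutations σ₁, σ₂, σ₃, σ₄, σ₅ in the symmetric group Sₙ on n letters such that: σ₁, σ₂, σ₃ each have cycle type consisting of (n-2)/2 copies of 2 (each is a product of (n-2)/2 disjoint transpositions), σ₄ has cycle type consisting of n/2 copies of 2 (a fixed-point-free involution), σ₅ has cycle type {2} (a single transposition), σ₁σ₂σ₃σ₄σ₅ = 1, and the subgroup of Sₙ generated by σ₁, …, σ₅ is transitive on the n letters. -/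
/-!
Write `n = 2m` and let `τ = (0 1)`, `ρ = (2 3)(4 5)⋯(n-2 n-1)`, `μ = (1 2)(3 4)⋯(n-3 n-2)`.
The tuple `(μ, μ, ρ, τρ, τ)` has the required cycle types; since `τ` and `ρ` are disjoint,
`ρ · τρ · τ = (τρ)²`, so the product is `μ² (τρ)² = 1`. Every consecutive pair `{i, i+1}` is
swapped by `μ` or by `τρ`, so already these two generate a transitive group.
-/

open Equiv

namespace Equiv.Perm

theorem mul_self_eq_one_of_cycleType_eq_replicate_two {α : Type*} [Fintype α] [DecidableEq α]
    {σ : Perm α} {k : ℕ} (h : σ.cycleType = Multiset.replicate k 2) : σ * σ = 1 := by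
  have hdvd : orderOf σ ∣ 2 := by
    rw [← lcm_cycleType, h, Multiset.lcm_dvd]
    intro b hb
    rw [Multiset.eq_of_mem_replicate hb]
  rw [← sq]
  exact orderOf_dvd_iff_pow_eq_one.mp hdvd

end Equiv.Perm

namespace Fin

/-- The transposition `(i i+1)`; junk value `1` when `i + 1 ≥ n`. -/
def adjSwap (n i : ℕ) : Perm (Fin n) :=
  if h : i + 1 < n then swap ⟨i, by omega⟩ ⟨i + 1, h⟩ else 1

def adjSwaps (n a k : ℕ) : Perm (Fin n) :=
  ((List.range k).map fun i => adjSwap n (a + 2 * i)).prod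

variable {n : ℕ}

theorem adjSwap_apply_of_ne {i : ℕ} {x : Fin n} (h₁ : x.val ≠ i) (h₂ : x.val ≠ i + 1) :
    adjSwap n i x = x := by
  unfold adjSwap
  split
  · apply swap_apply_of_ne_of_ne <;> simpa [Fin.ext_iff]
  · rfl

theorem val_adjSwap_apply_succ {i : ℕ} {x : Fin n} (hx : x.val = i + 1) :
    (adjSwap n i x).val = i := by
  have h : i + 1 < n := hx ▸ x.isLt
  obtain rfl : x = ⟨i + 1, h⟩ := Fin.ext hx
  simp [adjSwap, h]

theorem cycleType_adjSwap {i : ℕ} (h : i + 1 < n) : (adjSwap n i).cycleType = {2} := by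
  rw [adjSwap, dif_pos h]
  exact Perm.isSwap_iff_cycleType.mp ⟨_, _, by simp [Fin.ext_iff], rfl⟩

theorem adjSwaps_succ (a k : ℕ) : adjSwaps n a (k + 1) = adjSwap n a * adjSwaps n (a + 2) k := by
  simp only [adjSwaps, List.range_succ_eq_map, List.map_cons, List.prod_cons, List.map_map]
  congr 3
  funext i
  simp only [Function.comp_apply]
  congr 1
  omega

theorem disjoint_adjSwap_adjSwaps {b a : ℕ} (k : ℕ) (hb : b + 2 ≤ a) :
    (adjSwap n b).Disjoint (adjSwaps n a k) := by
  apply Perm.disjoint_prod_right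
  simp only [List.mem_map, List.mem_range]
  rintro _ ⟨i, -, rfl⟩ x
  by_cases hx : x.val = b ∨ x.val = b + 1
  · exact .inr (adjSwap_apply_of_ne (by omega) (by omega))
  · exact .inl (adjSwap_apply_of_ne (by omega) (by omega))

theorem cycleType_adjSwaps {a k : ℕ} (h : a + 2 * k ≤ n) :
    (adjSwaps n a k).cycleType = Multiset.replicate k 2 := by
  induction k generalizing a with
  | zero => simp [adjSwaps]
  | succ k ih =>
    rw [adjSwaps_succ, (disjoint_adjSwap_adjSwaps k (le_refl _)).cycleType_mul,
      cycleType_adjSwap (by omega), ih (by omega), Multiset.replicate_succ]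
    rfl

theorem adjSwaps_apply_of_lt {a : ℕ} (k : ℕ) {x : Fin n} (hx : x.val < a) :
    adjSwaps n a k x = x := by
  induction k generalizing a with
  | zero => rfl
  | succ k ih =>
    rw [adjSwaps_succ, Perm.mul_apply, ih (by omega)]
    exact adjSwap_apply_of_ne (by omega) (by omega)

theorem val_adjSwaps_apply {a k i : ℕ} (hik : i < k) {x : Fin n} (hx : x.val = a + 2 * i + 1) :
    (adjSwaps n a k x).val = a + 2 * i := by
  induction k generalizing a i with
  | zero => omega
  | succ k ih =>
    rw [adjSwaps_succ, Perm.mul_apply]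
    rcases i with _ | i
    · rw [adjSwaps_apply_of_lt k (by omega)]
      exact val_adjSwap_apply_succ hx
    · have hx' : (adjSwaps n (a + 2) k x).val = a + 2 + 2 * i := ih (by omega) (by omega)
      rw [adjSwap_apply_of_ne (by omega) (by omega), hx']
      omega

end Fin

namespace Subgroup

theorem exists_apply_eq_of_forall_exists_apply_lt {n : ℕ} (H : Subgroup (Perm (Fin n)))
    (hlower : ∀ x : Fin n, 0 < x.val → ∃ g ∈ H, (g x).val < x.val) (a b : Fin n) :
    ∃ g ∈ H, g a = b := by
  have hzero : ∀ x : Fin n, ∃ g ∈ H, (g x).val = 0 := by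
    intro x
    induction x using WellFoundedLT.induction with
    | _ x ih =>
      rcases Nat.eq_zero_or_pos x.val with hx | hx
      · exact ⟨1, H.one_mem, hx⟩
      obtain ⟨g, hg, hgx⟩ := hlower x hx
      obtain ⟨f, hf, hfgx⟩ := ih (g x) hgx
      exact ⟨f * g, H.mul_mem hf hg, hfgx⟩
  obtain ⟨g, hg, hga⟩ := hzero a
  obtain ⟨f, hf, hfb⟩ := hzero b
  refine ⟨f⁻¹ * g, H.mul_mem (H.inv_mem hf) hg, ?_⟩
  rw [Perm.mul_apply, Perm.inv_eq_iff_eq, Fin.ext_iff, hga, hfb]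

end Subgroup

open Fin in
/-- Generic Type I branch-cycle tuple of even degree `n ≥ 4`:
cycle types `(2^((n-2)/2), 2^((n-2)/2), 2^((n-2)/2), 2^(n/2), 2)`,
product one, generating a transitive subgroup of `Sₙ`. -/
theorem stmt_8 (n : ℕ) (hn : Even n) (hn4 : 4 ≤ n) :
    ∃ σ₁ σ₂ σ₃ σ₄ σ₅ : Equiv.Perm (Fin n),
      σ₁.cycleType = Multiset.replicate ((n - 2) / 2) 2 ∧
      σ₂.cycleType = Multiset.replicate ((n - 2) / 2) 2 ∧
      σ₃.cycleType = Multiset.replicate ((n - 2) / 2) 2 ∧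
      σ₄.cycleType = Multiset.replicate (n / 2) 2 ∧
      σ₅.cycleType = {2} ∧
      σ₁ * σ₂ * σ₃ * σ₄ * σ₅ = 1 ∧
      ∀ a b : Fin n,
        ∃ g ∈ Subgroup.closure ({σ₁, σ₂, σ₃, σ₄, σ₅} : Set (Equiv.Perm (Fin n))), g a = b := by
  obtain ⟨m, rfl⟩ := hn
  set μ := adjSwaps (m + m) 1 (m - 1)
  set ρ := adjSwaps (m + m) 2 (m - 1)
  set τρ := adjSwaps (m + m) 0 m
  set τ := adjSwap (m + m) 0
  have hμ : μ.cycleType = Multiset.replicate (m - 1) 2 := cycleType_adjSwaps (by omega)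
  have hρ : ρ.cycleType = Multiset.replicate (m - 1) 2 := cycleType_adjSwaps (by omega)
  have hτρ : τρ.cycleType = Multiset.replicate m 2 := cycleType_adjSwaps (by omega)
  have hτρ_eq : τρ = τ * ρ := by rw [← adjSwaps_succ, Nat.sub_add_cancel (by omega)]
  have hcomm : τ * ρ = ρ * τ := (disjoint_adjSwap_adjSwaps (m - 1) (le_refl 2)).commute.eq
  refine ⟨μ, μ, ρ, τρ, τ, by rw [hμ]; congr 1; omega, by rw [hμ]; congr 1; omega,
    by rw [hρ]; congr 1; omega, by rw [hτρ]; congr 1; omega, cycleType_adjSwap (by omega), ?_, ?_⟩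
  · calc μ * μ * ρ * τρ * τ = μ * μ * ((ρ * τ) * (ρ * τ)) := by rw [hτρ_eq]; group
      _ = μ * μ * (τρ * τρ) := by rw [hτρ_eq, hcomm]
      _ = 1 := by
        rw [Perm.mul_self_eq_one_of_cycleType_eq_replicate_two hμ,
          Perm.mul_self_eq_one_of_cycleType_eq_replicate_two hτρ, one_mul]
  · apply Subgroup.exists_apply_eq_of_forall_exists_apply_lt
    intro x hx
    obtain ⟨i, hi | hi⟩ := Nat.even_or_odd' x.val
    · refine ⟨μ, Subgroup.subset_closure (by simp), ?_⟩
      rw [val_adjSwaps_apply (i := i - 1) (by omega) (by omega)]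
      omega
    · refine ⟨τρ, Subgroup.subset_closure (by simp), ?_⟩
      rw [val_adjSwaps_apply (i := i) (by omega) (by omega)]
      omega
end

section
/- For every even integer n ≥ 6, there exist permutations σ₁, σ₂, σ₃, σ₄, σ₅ in the symmetric group Sₙ on n letters such that: σ₁ has cycle type consisting of (n-4)/2 copies of 2, σ₂ has cycle type consisting of (n-2)/2 copies of 2, σ₃ and σ₄ each have cycle type consisting of n/2 copies of 2 (fixed-point-free involutions), σ₅ has cycle type {2} (a single transposition), σ₁σ₂σ₃σ₄σ₅ = 1, and the subgroup of Sₙ generated by σ₁, …, σ₅ is transitive on the n letters. -/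
/-!
Identify the letters with the cyclic group `G` of order `n` and fix a generator `u`. The
reflection `r c : x ↦ c - x` is an involution whose fixed points solve `x + x = c`. Doubling
kills an element of order two, so it is not onto and misses the generators `±u`: `r u` and
`r (-u)` are fixed-point-free. For a double `c = a + a` the fixed points form the coset
`a + {t | t + t = 0}`, of size two, so `r 0` and `r (u + u)` fix two letters each, and
`σ₁ := swap 0 (u + u) * r (u + u)` fixes also the pair `0, u + u` which `r (u + u)` swaps.
As `r 0 * r (-u) * r u = r (u + u)`, the product is `1`, and `r u * r 0` is the translation
by `u`, which is transitive on its own.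
-/

open Equiv Finset

namespace Equiv.Perm

variable {α : Type*} {ρ : Perm α} {a b : α}

theorem apply_apply_of_mul_self_eq_one (hρ : ρ * ρ = 1) (x : α) : ρ (ρ x) = x := by
  rw [← mul_apply, hρ, one_apply]

variable [DecidableEq α]

theorem swap_mul_mul_swap_mul_eq_one (hρ : ρ * ρ = 1) (hab : ρ a = b) :
    swap a b * ρ * (swap a b * ρ) = 1 := by
  have hba : ρ b = a := by rw [← hab, apply_apply_of_mul_self_eq_one hρ]
  calc swap a b * ρ * (swap a b * ρ) = swap a b * (ρ * swap a b) * ρ := by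
        simp only [mul_assoc]
    _ = swap a b * (swap a b * ρ) * ρ := by rw [mul_swap_eq_swap_mul, hab, hba, swap_comm]
    _ = 1 := by rw [← mul_assoc, swap_mul_self, one_mul, hρ]

variable [Fintype α]

theorem cycleType_eq_replicate_of_mul_self_eq_one {σ : Perm α} (h : σ * σ = 1) :
    σ.cycleType = Multiset.replicate (#σ.support / 2) 2 := by
  rcases eq_or_ne σ 1 with rfl | hσ
  · simp
  have horder : orderOf σ = 2 := orderOf_eq_prime (by rwa [sq]) hσ
  obtain ⟨k, hk⟩ := cycleType_prime_order (horder ▸ Nat.prime_two)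
  rw [horder] at hk
  have hsum := sum_cycleType σ
  rw [hk, Multiset.sum_replicate, smul_eq_mul] at hsum
  rw [hk, ← hsum, Nat.mul_div_cancel _ two_pos]

theorem support_swap_mul_of_apply_eq (hρ : ρ * ρ = 1) (hne : a ≠ b) (hab : ρ a = b) :
    (swap a b * ρ).support = ρ.support \ {a, b} := by
  have hba : ρ b = a := by rw [← hab, apply_apply_of_mul_self_eq_one hρ]
  ext x
  simp only [mem_sdiff, mem_support, mem_insert, mem_singleton, mul_apply, not_or]
  rcases eq_or_ne x a with rfl | hxa
  · simp [hab]
  rcases eq_or_ne x b with rfl | hxb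
  · simp [hba]
  rw [swap_apply_of_ne_of_ne (fun h => hxb (ρ.injective (h.trans hba.symm)))
    (fun h => hxa (ρ.injective (h.trans hab.symm)))]
  tauto

theorem cycleType_swap_mul_of_apply_eq (hρ : ρ * ρ = 1) (hne : a ≠ b) (hab : ρ a = b) :
    (swap a b * ρ).cycleType = Multiset.replicate ((#ρ.support - 2) / 2) 2 := by
  have hba : ρ b = a := by rw [← hab, apply_apply_of_mul_self_eq_one hρ]
  have hsub : {a, b} ⊆ ρ.support := by
    simp [insert_subset_iff, hab, hba, hne, hne.symm]
  rw [cycleType_eq_replicate_of_mul_self_eq_one (swap_mul_mul_swap_mul_eq_one hρ hab),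
    support_swap_mul_of_apply_eq hρ hne hab, card_sdiff_of_subset hsub, card_pair hne]

end Equiv.Perm

open Equiv.Perm AddSubgroup

namespace Equiv

variable {G : Type*} [AddCommGroup G]

theorem subLeft_mul_self (c : G) : (Equiv.subLeft c : Perm G) * Equiv.subLeft c = 1 :=
  Perm.ext fun x => subLeft_involutive c x

theorem subLeft_mul_subLeft (c d : G) :
    (Equiv.subLeft c : Perm G) * Equiv.subLeft d = Equiv.addRight (c - d) := by
  ext x
  simp only [Perm.mul_apply, subLeft_apply, coe_addRight]
  abel

theorem subLeft_zero_mul_subLeft_neg_mul_subLeft (u : G) :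
    (Equiv.subLeft 0 : Perm G) * Equiv.subLeft (-u) * Equiv.subLeft u = Equiv.subLeft (u + u) := by
  ext x
  simp only [Perm.mul_apply, subLeft_apply]
  abel

theorem mul_subLeft_add_self_mul_subLeft_zero_mul_subLeft_neg_mul_subLeft_mul {σ : Perm G}
    (hσ : σ * σ = 1) (u : G) :
    σ * Equiv.subLeft (u + u) * Equiv.subLeft 0 * Equiv.subLeft (-u) * Equiv.subLeft u * σ = 1 :=
  calc _ = σ * (Equiv.subLeft (u + u) *
        (Equiv.subLeft 0 * Equiv.subLeft (-u) * Equiv.subLeft u)) * σ := by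
        simp only [mul_assoc]
    _ = 1 := by rw [subLeft_zero_mul_subLeft_neg_mul_subLeft, subLeft_mul_self, mul_one, hσ]

theorem exists_zpow_subLeft_mul_subLeft_zero_apply_eq {u : G}
    (hu : ∀ x : G, x ∈ AddSubgroup.zmultiples u) (a b : G) :
    ∃ k : ℤ, ((Equiv.subLeft u * Equiv.subLeft 0 : Perm G) ^ k) a = b := by
  obtain ⟨k, hk⟩ := AddSubgroup.mem_zmultiples_iff.1 (hu (b - a))
  refine ⟨k, ?_⟩
  rw [subLeft_mul_subLeft, sub_zero, zsmul_addRight, coe_addRight, hk]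
  exact add_sub_cancel a b

variable [Fintype G] [DecidableEq G]

theorem card_support_subLeft (c : G) :
    #(Perm.support (Equiv.subLeft c)) = Fintype.card G - #{x : G | x + x = c} := by
  have : Perm.support (Equiv.subLeft c) = ({x : G | x + x = c} : Finset G)ᶜ := by
    ext x
    simp only [mem_support, subLeft_apply, mem_compl, mem_filter, mem_univ, true_and, ne_eq,
      sub_eq_iff_eq_add, eq_comm (a := c)]
  rw [this, card_compl]

theorem card_add_self_eq_add_self (a : G) :
    #{x : G | x + x = a + a} = #{x : G | x + x = 0} := by
  refine card_equiv (Equiv.subRight a) fun x => ?_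
  simp only [mem_filter, mem_univ, true_and, subRight_apply]
  rw [← sub_eq_zero (a := x + x), show x + x - (a + a) = x - a + (x - a) by abel]

theorem cycleType_subLeft_of_forall_add_self_ne {c : G} (hc : ∀ x : G, x + x ≠ c) :
    Perm.cycleType (Equiv.subLeft c) = Multiset.replicate (Fintype.card G / 2) 2 := by
  rw [cycleType_eq_replicate_of_mul_self_eq_one (subLeft_mul_self c), card_support_subLeft,
    filter_false_of_mem fun x _ => hc x, card_empty, Nat.sub_zero]

end Equiv

section Cyclic

variable {G : Type*} [AddCommGroup G] [Fintype G]

theorem add_self_ne_of_forall_mem_zmultiples {u : G} (hu : ∀ x : G, x ∈ zmultiples u)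
    (hG : Even (Fintype.card G)) (x : G) : x + x ≠ u := by
  intro hx
  have hsurj : Function.Surjective fun y : G => y + y := fun y => by
    obtain ⟨k, rfl⟩ := mem_zmultiples_iff.1 (hu y)
    exact ⟨k • x, by simp only [← zsmul_add, hx]⟩
  have : Fact (Nat.Prime 2) := ⟨Nat.prime_two⟩
  obtain ⟨t, ht⟩ := exists_prime_addOrderOf_dvd_card 2 (even_iff_two_dvd.1 hG)
  have htt : t + t = 0 + 0 := by rw [add_zero, ← two_nsmul, ← ht, addOrderOf_nsmul_eq_zero]
  rw [Finite.injective_iff_surjective.2 hsurj htt, addOrderOf_zero] at ht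
  exact absurd ht (by norm_num)

variable [DecidableEq G] [IsAddCyclic G]

theorem card_add_self_eq_zero (hG : Even (Fintype.card G)) : #{x : G | x + x = 0} = 2 := by
  have : Fact (Nat.Prime 2) := ⟨Nat.prime_two⟩
  obtain ⟨t, ht⟩ := exists_prime_addOrderOf_dvd_card 2 (even_iff_two_dvd.1 hG)
  refine le_antisymm ?_ ?_
  · calc #{x : G | x + x = 0} = #{x : G | 2 • x = 0} := by simp only [two_nsmul]
      _ ≤ 2 := by convert IsAddCyclic.card_nsmul_eq_zero_le (α := G) two_pos
  · have ht0 : t ≠ 0 := by rintro rfl; simp at ht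
    have htt : t + t = 0 := by rw [← two_nsmul, ← ht, addOrderOf_nsmul_eq_zero]
    rw [← card_pair ht0.symm]
    exact card_le_card (by simp [insert_subset_iff, htt])

theorem card_support_subLeft_add_self (hG : Even (Fintype.card G)) (a : G) :
    #(Perm.support (Equiv.subLeft (a + a))) = Fintype.card G - 2 := by
  rw [card_support_subLeft, card_add_self_eq_add_self, card_add_self_eq_zero hG]

theorem add_self_ne_zero_of_forall_mem_zmultiples {u : G} (hu : ∀ x : G, x ∈ zmultiples u)
    (hG : Even (Fintype.card G)) (hG₂ : 2 < Fintype.card G) : u + u ≠ 0 := by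
  intro huu
  have : #{x : G | x + x = 0} = Fintype.card G := by
    rw [filter_true_of_mem fun y _ => ?_, card_univ]
    obtain ⟨k, rfl⟩ := mem_zmultiples_iff.1 (hu y)
    rw [← zsmul_add, huu, zsmul_zero]
  rw [card_add_self_eq_zero hG] at this
  omega

end Cyclic

/-- Generic Type II branch-cycle tuple of even degree `n ≥ 6`:
cycle types `(2^((n-4)/2), 2^((n-2)/2), 2^(n/2), 2^(n/2), 2)`,
product one, generating a transitive subgroup of `Sₙ`. -/
theorem stmt_9 (n : ℕ) (hn : Even n) (hn6 : 6 ≤ n) :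
    ∃ σ₁ σ₂ σ₃ σ₄ σ₅ : Equiv.Perm (Fin n),
      σ₁.cycleType = Multiset.replicate ((n - 4) / 2) 2 ∧
      σ₂.cycleType = Multiset.replicate ((n - 2) / 2) 2 ∧
      σ₃.cycleType = Multiset.replicate (n / 2) 2 ∧
      σ₄.cycleType = Multiset.replicate (n / 2) 2 ∧
      σ₅.cycleType = {2} ∧
      σ₁ * σ₂ * σ₃ * σ₄ * σ₅ = 1 ∧
      ∀ a b : Fin n,
        ∃ g ∈ Subgroup.closure ({σ₁, σ₂, σ₃, σ₄, σ₅} : Set (Equiv.Perm (Fin n))), g a = b := by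
  have : NeZero n := ⟨by omega⟩
  have : IsAddCyclic (Fin n) := (ZMod.finEquiv n).toAddEquiv.isAddCyclic.2 inferInstance
  obtain ⟨u, hu⟩ := IsAddCyclic.exists_generator (α := Fin n)
  have hG : Even (Fintype.card (Fin n)) := by rwa [Fintype.card_fin]
  have hne : (0 : Fin n) ≠ u + u :=
    (add_self_ne_zero_of_forall_mem_zmultiples hu hG (by rw [Fintype.card_fin]; omega)).symm
  refine ⟨swap 0 (u + u) * Equiv.subLeft (u + u), Equiv.subLeft 0, Equiv.subLeft (-u),
    Equiv.subLeft u, swap 0 (u + u), ?_, ?_, ?_, ?_, ?_,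
    mul_subLeft_add_self_mul_subLeft_zero_mul_subLeft_neg_mul_subLeft_mul (swap_mul_self _ _) u,
    fun a b => ?_⟩
  · rw [cycleType_swap_mul_of_apply_eq (subLeft_mul_self _) hne (sub_zero _),
      card_support_subLeft_add_self hG, Fintype.card_fin, Nat.sub_sub]
  · rw [cycleType_eq_replicate_of_mul_self_eq_one (subLeft_mul_self _), ← add_zero (0 : Fin n),
      card_support_subLeft_add_self hG, Fintype.card_fin]
  · rw [cycleType_subLeft_of_forall_add_self_ne
      (add_self_ne_of_forall_mem_zmultiples (zmultiples_neg (g := u) ▸ hu) hG), Fintype.card_fin]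
  · rw [cycleType_subLeft_of_forall_add_self_ne (add_self_ne_of_forall_mem_zmultiples hu hG),
      Fintype.card_fin]
  · exact isSwap_iff_cycleType.1 ⟨0, u + u, hne, rfl⟩
  · obtain ⟨k, hk⟩ := exists_zpow_subLeft_mul_subLeft_zero_apply_eq hu a b
    exact ⟨_, zpow_mem (mul_mem (Subgroup.subset_closure (by simp))
      (Subgroup.subset_closure (by simp))) k, hk⟩
end

section
/- For every even integer n ≥ 8, there exist permutations σ₁, σ₂, σ₃, σ₄ in the symmetric group Sₙ on n letters such that: σ₁ and σ₂ each have cycle type consisting of (n-2)/2 copies of 2, σ₃ has cycle type consisting of one 4 together with (n-6)/2 copies of 2 (a 4-cycle times (n-6)/2 disjoint transpositions), σ₄ has cycle type consisting of n/2 copies of 2 (a fixed-point-free involution), σ₁σ₂σ₃σ₄ = 1, and the subgroup of Sₙ generated by σ₁, σ₂, σ₃, σ₄ is transitive on the n letters. -/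
/-!
Work in `ZMod n` with `n = 2m` and transport to `Fin n` at the end. The reflections
`r a : x ↦ a - x` are involutions; `r a` has no fixed point for odd `a`, and `r 0` fixes exactly
`0` and `m`. Take `σ₁ = r 0`, `σ₂ = r 2`, `σ₃ = r 5 * s`, `σ₄ = s * r 3` with `s = (0 1)(2 3)`, so
that `σ₁ σ₂` and `σ₃ σ₄` are the translations by `-2` and `2`. As `r 5` and `r 3` preserve
`{0, …, 5}` and `{0, …, 3}`, the cycle types of `σ₃` and `σ₄` are obtained from those of `r 5`
and `r 3` by a computation inside these small sets. Translation by `2` moves `0` to every even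
residue, and `σ₃² 0 = 1`, whence transitivity.
-/

open Equiv Finset

namespace Equiv.Perm

variable {α β : Type*}

theorem viaEmbedding_mul (σ τ : Perm α) (ι : α ↪ β) :
    (σ * τ).viaEmbedding ι = σ.viaEmbedding ι * τ.viaEmbedding ι :=
  map_mul (viaEmbeddingHom ι) σ τ

theorem exists_mem_closure_image_apply_eq (e : α ≃ β) {S : Set (Perm α)}
    (h : ∀ a b, ∃ g ∈ Subgroup.closure S, g a = b) (a b : β) :
    ∃ g ∈ Subgroup.closure (viaEmbeddingHom e.toEmbedding '' S), g a = b := by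
  obtain ⟨g, hg, hgab⟩ := h (e.symm a) (e.symm b)
  refine ⟨viaEmbeddingHom e.toEmbedding g, ?_, ?_⟩
  · rw [← MonoidHom.map_closure]
    exact Subgroup.mem_map_of_mem _ hg
  · calc g.viaEmbedding e.toEmbedding a = e (g (e.symm a)) := by
          simpa using viaEmbedding_apply g e.toEmbedding (e.symm a)
      _ = b := by rw [hgab, e.apply_symm_apply]

theorem viaEmbedding_swap [DecidableEq α] [DecidableEq β] (ι : α ↪ β) (i j : α) :
    (swap i j).viaEmbedding ι = swap (ι i) (ι j) := by
  ext x
  by_cases hx : x ∈ Set.range ι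
  · obtain ⟨a, rfl⟩ := hx
    rw [viaEmbedding_apply, ι.swap_apply]
  · have hi : x ≠ ι i := fun h => hx ⟨i, h.symm⟩
    have hj : x ≠ ι j := fun h => hx ⟨j, h.symm⟩
    rw [viaEmbedding_apply_of_notMem _ _ _ hx, swap_apply_of_ne_of_ne hi hj]

variable [Fintype α] [DecidableEq α] [Fintype β] [DecidableEq β]

theorem cycleType_of_sq_eq_one {σ : Perm α} (h : σ ^ 2 = 1) :
    σ.cycleType = Multiset.replicate (#σ.support / 2) 2 := by
  have hσ := cycleType_of_pow_prime_eq_one h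
  have hsum := σ.sum_cycleType
  rw [hσ, Multiset.sum_replicate, smul_eq_mul] at hsum
  rw [hσ, ← hsum, Nat.mul_div_cancel _ two_pos]

theorem cycleType_mul_comm (σ τ : Perm α) : (σ * τ).cycleType = (τ * σ).cycleType := by
  simpa [mul_assoc] using cycleType_conj (σ := τ * σ) (τ := σ)

theorem cycleType_viaEmbedding (σ : Perm α) (ι : α ↪ β) :
    (σ.viaEmbedding ι).cycleType = σ.cycleType := by
  classical
  rw [viaEmbedding]
  convert cycleType_extendDomain (ofInjective ι.1 ι.2)

/-- Writing `R = ρ * r.viaEmbedding ι`, the factor `ρ` is supported off the range of `ι`, hence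
disjoint from everything coming from `α`. -/
theorem cycleType_mul_viaEmbedding_add {R : Perm β} {r : Perm α} {ι : α ↪ β}
    (hR : ∀ a, R (ι a) = ι (r a)) (π : Perm α) :
    (R * π.viaEmbedding ι).cycleType + r.cycleType = R.cycleType + (r * π).cycleType := by
  set ρ := R * (r.viaEmbedding ι)⁻¹
  have hρ (a : α) : ρ (ι a) = ι a := by
    have hinv : (r.viaEmbedding ι)⁻¹ (ι a) = ι (r⁻¹ a) := by
      rw [inv_eq_iff_eq, viaEmbedding_apply, ← mul_apply, mul_inv_cancel, one_apply]
    rw [mul_apply, hinv, hR, ← mul_apply r, mul_inv_cancel, one_apply]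
  have hdisj (τ : Perm α) : ρ.Disjoint (τ.viaEmbedding ι) := fun x => by
    by_cases hx : x ∈ Set.range ι
    · obtain ⟨a, rfl⟩ := hx
      exact Or.inl (hρ a)
    · exact Or.inr (viaEmbedding_apply_of_notMem _ _ _ hx)
  have hR' : R = ρ * r.viaEmbedding ι := by simp [ρ]
  have hRπ : R * π.viaEmbedding ι = ρ * (r * π).viaEmbedding ι := by
    rw [hR', mul_assoc, viaEmbedding_mul]
  rw [hRπ, (hdisj _).cycleType_mul, cycleType_viaEmbedding, hR', (hdisj _).cycleType_mul,
    cycleType_viaEmbedding, add_right_comm]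

end Equiv.Perm

open Equiv.Perm

namespace ZMod

variable {n : ℕ}

def finEmbedding {k : ℕ} (h : k ≤ n) : Fin k ↪ ZMod n :=
  ⟨fun i => (i : ℕ), fun i j hij => Fin.ext <| by
    simpa [val_cast_of_lt (i.isLt.trans_le h), val_cast_of_lt (j.isLt.trans_le h)]
      using congrArg val hij⟩

@[simp]
theorem finEmbedding_apply {k : ℕ} (h : k ≤ n) (i : Fin k) : finEmbedding h i = (i : ℕ) := rfl

def reflection (a : ZMod n) : Perm (ZMod n) := Equiv.subLeft a

@[simp]
theorem reflection_apply (a x : ZMod n) : reflection a x = a - x := rfl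

theorem reflection_sq (a : ZMod n) : reflection a ^ 2 = 1 := by
  ext x
  simp [sq]

theorem reflection_mul_reflection (a b : ZMod n) :
    reflection a * reflection b = Equiv.addLeft (a - b) := by
  ext x
  simp only [mul_apply, reflection_apply, coe_addLeft]
  ring

theorem reflection_finEmbedding {a : ℕ} (h : a + 1 ≤ n) (i : Fin (a + 1)) :
    reflection (a : ZMod n) (finEmbedding h i) = finEmbedding h i.rev := by
  simp only [reflection_apply, finEmbedding_apply, Fin.val_rev]
  rw [Nat.add_sub_add_right, Nat.cast_sub (Nat.le_of_lt_succ i.isLt)]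

theorem reflection_apply_ne_self (hn : Even n) {a : ℕ} (ha : Odd a) (x : ZMod n) :
    reflection (a : ZMod n) x ≠ x := by
  intro h
  have h2 := congrArg (castHom (even_iff_two_dvd.mp hn) (ZMod 2)) h
  rw [reflection_apply, map_sub, map_natCast, natCast_eq_one_iff_odd.mpr ha] at h2
  generalize castHom _ (ZMod 2) x = y at h2
  revert y
  decide

theorem cycleType_reflection_of_odd [NeZero n] (hn : Even n) {a : ℕ} (ha : Odd a) :
    (reflection (a : ZMod n)).cycleType = Multiset.replicate (n / 2) 2 := by
  have hsupp : (reflection (a : ZMod n)).support = univ :=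
    eq_univ_of_forall fun x => mem_support.mpr (reflection_apply_ne_self hn ha x)
  rw [cycleType_of_sq_eq_one (reflection_sq _), hsupp, card_univ, ZMod.card]

theorem support_reflection_zero (m : ℕ) [NeZero m] :
    (reflection (0 : ZMod (m + m))).support = {0, (m : ZMod (m + m))}ᶜ := by
  have hm : m < m + m := by have := NeZero.ne m; omega
  ext x
  have hx : 2 * x.val = m + m ↔ x = m := by
    constructor
    · intro h
      rw [← natCast_zmod_val x]
      congr 1
      omega
    · rintro rfl
      rw [val_cast_of_lt hm]
      ring
  rw [mem_support, reflection_apply, zero_sub, Ne, neg_eq_self_iff, hx, mem_compl, mem_insert,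
    mem_singleton]

theorem cycleType_reflection_zero [NeZero n] (hn : Even n) :
    (reflection (0 : ZMod n)).cycleType = Multiset.replicate ((n - 2) / 2) 2 := by
  obtain ⟨m, rfl⟩ := hn
  have : NeZero m := ⟨by have := NeZero.ne (m + m); omega⟩
  have hm : m < m + m := by have := NeZero.ne m; omega
  have h0m : (0 : ZMod (m + m)) ≠ m := fun h => by
    have := congrArg val h
    rw [val_zero, val_cast_of_lt hm] at this
    omega
  rw [cycleType_of_sq_eq_one (reflection_sq _), support_reflection_zero, card_compl, ZMod.card,
    card_pair h0m]

theorem cycleType_reflection_two [NeZero n] (hn : Even n) :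
    (reflection (2 : ZMod n)).cycleType = Multiset.replicate ((n - 2) / 2) 2 := by
  have hconj : reflection (2 : ZMod n) =
      Equiv.addLeft 1 * reflection 0 * (Equiv.addLeft 1)⁻¹ := by
    ext x
    simp only [mul_apply, reflection_apply, coe_addLeft, Perm.inv_def, addLeft_symm_apply]
    ring
  rw [hconj, cycleType_conj, cycleType_reflection_zero hn]

def swapPairs : Perm (ZMod n) := swap 0 1 * swap 2 3

theorem swapPairs_eq_viaEmbedding {k : ℕ} [NeZero k] (h4 : 4 ≤ k) (h : k ≤ n) :
    swapPairs = (swap 0 1 * swap 2 3 : Perm (Fin k)).viaEmbedding (finEmbedding h) := by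
  rw [swapPairs, viaEmbedding_mul, viaEmbedding_swap, viaEmbedding_swap]
  simp [Nat.mod_eq_of_lt (show 1 < k by omega), Nat.mod_eq_of_lt (show 2 < k by omega),
    Nat.mod_eq_of_lt (show 3 < k by omega)]

theorem swapPairs_mul_self (h4 : 4 ≤ n) : (swapPairs * swapPairs : Perm (ZMod n)) = 1 := by
  rw [swapPairs_eq_viaEmbedding le_rfl h4, ← viaEmbedding_mul,
    show (swap 0 1 * swap 2 3 * (swap 0 1 * swap 2 3) : Perm (Fin 4)) = 1 by decide,
    ← viaEmbeddingHom_apply, map_one]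

theorem cycleType_reflection_five_mul_swapPairs [NeZero n] (hn : Even n) (h6 : 6 ≤ n) :
    (reflection (5 : ZMod n) * swapPairs).cycleType =
      4 ::ₘ Multiset.replicate ((n - 6) / 2) 2 := by
  have key := cycleType_mul_viaEmbedding_add (R := reflection (5 : ZMod n)) (r := Fin.revPerm)
    (ι := finEmbedding h6) (reflection_finEmbedding (a := 5) h6) (swap 0 1 * swap 2 3)
  rw [← swapPairs_eq_viaEmbedding (by norm_num) h6,
    show (reflection (5 : ZMod n)).cycleType = _ from
      cycleType_reflection_of_odd hn (by decide : Odd 5),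
    show (Fin.revPerm : Perm (Fin 6)).cycleType = Multiset.replicate 3 2 by decide,
    show (Fin.revPerm * (swap 0 1 * swap 2 3) : Perm (Fin 6)).cycleType = {4} by decide,
    show n / 2 = (n - 6) / 2 + 3 by omega, Multiset.replicate_add, add_right_comm,
    add_left_inj] at key
  rw [key, add_comm, Multiset.singleton_add]

theorem cycleType_swapPairs_mul_reflection_three [NeZero n] (hn : Even n) (h4 : 4 ≤ n) :
    (swapPairs * reflection (3 : ZMod n)).cycleType = Multiset.replicate (n / 2) 2 := by
  have key := cycleType_mul_viaEmbedding_add (R := reflection (3 : ZMod n)) (r := Fin.revPerm)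
    (ι := finEmbedding h4) (reflection_finEmbedding (a := 3) h4) (swap 0 1 * swap 2 3)
  rw [← swapPairs_eq_viaEmbedding le_rfl h4,
    show (reflection (3 : ZMod n)).cycleType = _ from
      cycleType_reflection_of_odd hn (by decide : Odd 3),
    show (Fin.revPerm * (swap 0 1 * swap 2 3) : Perm (Fin 4)).cycleType =
      (Fin.revPerm : Perm (Fin 4)).cycleType by decide, add_left_inj] at key
  rw [cycleType_mul_comm, key]

theorem reflection_five_mul_swapPairs_mul_swapPairs_mul_reflection_three (h4 : 4 ≤ n) :
    reflection (5 : ZMod n) * swapPairs * (swapPairs * reflection 3) = Equiv.addLeft 2 := by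
  calc _ = reflection (5 : ZMod n) * (swapPairs * swapPairs) * reflection 3 := by
        simp only [mul_assoc]
    _ = Equiv.addLeft 2 := by
      rw [swapPairs_mul_self h4, mul_one, reflection_mul_reflection]
      norm_num

theorem reflection_five_mul_swapPairs_sq_apply_zero (h6 : 6 ≤ n) :
    ((reflection (5 : ZMod n) * swapPairs : Perm (ZMod n)) ^ 2) 0 = 1 := by
  have hι (i : Fin 6) : (reflection (5 : ZMod n) * swapPairs : Perm (ZMod n)) (finEmbedding h6 i) =
      finEmbedding h6 ((swap 0 1 * swap 2 3 : Perm (Fin 6)) i).rev := by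
    rw [mul_apply, swapPairs_eq_viaEmbedding (by norm_num) h6, viaEmbedding_apply]
    exact reflection_finEmbedding (a := 5) h6 _
  have h0 : (0 : ZMod n) = finEmbedding h6 0 := by simp
  have h1 : (1 : ZMod n) = finEmbedding h6 1 := by simp
  generalize (reflection (5 : ZMod n) * swapPairs : Perm (ZMod n)) = σ at hι ⊢
  rw [sq, mul_apply, h0, hι, hι, h1]
  rfl

theorem exists_mem_apply_eq_of_addLeft_two_mem [NeZero n] {H : Subgroup (Perm (ZMod n))}
    (h2 : Equiv.addLeft 2 ∈ H) {g : Perm (ZMod n)} (hg : g ∈ H) (hg0 : g 0 = 1) (a b : ZMod n) :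
    ∃ f ∈ H, f a = b := by
  have reach (j : ℕ) : ∃ f ∈ H, f 0 = j := by
    induction j using Nat.twoStepInduction with
    | zero => exact ⟨1, H.one_mem, by simp⟩
    | one => exact ⟨g, hg, by simpa using hg0⟩
    | more j ih _ =>
      obtain ⟨f, hf, hfj⟩ := ih
      refine ⟨Equiv.addLeft 2 * f, H.mul_mem h2 hf, ?_⟩
      rw [mul_apply, hfj, coe_addLeft]
      push_cast
      ring
  obtain ⟨f, hf, hfa⟩ := reach a.val
  obtain ⟨f', hf', hfb⟩ := reach b.val
  rw [natCast_zmod_val] at hfa hfb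
  refine ⟨f' * f⁻¹, H.mul_mem hf' (H.inv_mem hf), ?_⟩
  rw [mul_apply, inv_eq_iff_eq.mpr hfa.symm, hfb]

theorem exists_mem_closure_apply_eq [NeZero n] (h6 : 6 ≤ n) (a b : ZMod n) :
    ∃ g ∈ Subgroup.closure {reflection 0, reflection 2, reflection 5 * swapPairs,
      swapPairs * reflection 3}, g a = b := by
  set H := Subgroup.closure ({reflection 0, reflection 2, reflection 5 * swapPairs,
    swapPairs * reflection 3} : Set (Perm (ZMod n)))
  have h3 : reflection 5 * swapPairs ∈ H := Subgroup.subset_closure (by simp)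
  have h4 : swapPairs * reflection 3 ∈ H := Subgroup.subset_closure (by simp)
  have h2 : Equiv.addLeft 2 ∈ H := by
    rw [← reflection_five_mul_swapPairs_mul_swapPairs_mul_reflection_three (by omega)]
    exact H.mul_mem h3 h4
  exact exists_mem_apply_eq_of_addLeft_two_mem h2 (H.pow_mem h3 2)
    (reflection_five_mul_swapPairs_sq_apply_zero h6) a b

end ZMod

/-- Type I degeneration 2 for even `n ≥ 8`:
cycle types `(2^((n-2)/2), 2^((n-2)/2), (4)(2)^((n-6)/2), 2^(n/2))`,
product one, generating a transitive subgroup of `Sₙ`. -/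
theorem stmt_12 (n : ℕ) (hn : Even n) (hn8 : 8 ≤ n) :
    ∃ σ₁ σ₂ σ₃ σ₄ : Equiv.Perm (Fin n),
      σ₁.cycleType = Multiset.replicate ((n - 2) / 2) 2 ∧
      σ₂.cycleType = Multiset.replicate ((n - 2) / 2) 2 ∧
      σ₃.cycleType = 4 ::ₘ Multiset.replicate ((n - 6) / 2) 2 ∧
      σ₄.cycleType = Multiset.replicate (n / 2) 2 ∧
      σ₁ * σ₂ * σ₃ * σ₄ = 1 ∧
      ∀ a b : Fin n,
        ∃ g ∈ Subgroup.closure ({σ₁, σ₂, σ₃, σ₄} : Set (Equiv.Perm (Fin n))), g a = b := by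
  have : NeZero n := ⟨by omega⟩
  set φ := viaEmbeddingHom (ZMod.finEquiv n).symm.toEquiv.toEmbedding
  have hφ (σ : Perm (ZMod n)) : (φ σ).cycleType = σ.cycleType := cycleType_viaEmbedding _ _
  refine ⟨φ (ZMod.reflection 0), φ (ZMod.reflection 2), φ (ZMod.reflection 5 * ZMod.swapPairs),
    φ (ZMod.swapPairs * ZMod.reflection 3), ?_, ?_, ?_, ?_, ?_, ?_⟩
  · rw [hφ, ZMod.cycleType_reflection_zero hn]
  · rw [hφ, ZMod.cycleType_reflection_two hn]
  · rw [hφ, ZMod.cycleType_reflection_five_mul_swapPairs hn (by omega)]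
  · rw [hφ, ZMod.cycleType_swapPairs_mul_reflection_three hn (by omega)]
  · rw [← map_mul, ← map_mul, ← map_mul, mul_assoc _ (ZMod.reflection 5 * _),
      ZMod.reflection_five_mul_swapPairs_mul_swapPairs_mul_reflection_three (by omega),
      ZMod.reflection_mul_reflection, ← map_one φ]
    congr 1
    ext x
    simp
  · simpa [Set.image_insert_eq] using
      exists_mem_closure_image_apply_eq _ (ZMod.exists_mem_closure_apply_eq (by omega))
end

section
/- For every even integer n ≥ 6, there exist permutations σ₁, σ₂, σ₃, σ₄ in the symmetric group Sₙ on n letters such that: σ₁, σ₂, σ₃ each have cycle type consisting of (n-2)/2 copies of 2, σ₄ has cycle type consisting of one 4 together with (n-4)/2 copies of 2 (a 4-cycle times (n-4)/2 disjoint transpositions), σ₁σ₂σ₃σ₄ = 1, and the subgroup of Sₙ generated by σ₁, σ₂, σ₃, σ₄ is transitive on the n letters. -/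
/-!
Let `N = n - 1`, which is odd, and let `h = 1/2` in `ZMod N`. On `ZMod N ∪ {∞}` take
`σ₂ : j ↦ -j`, its conjugate `σ₁ : j ↦ 1 - j` by the translation `j ↦ j + h`, and its conjugate
`σ₃` by the transposition `(∞ h)`; all three are involutions with exactly two fixed points.
Then `σ₂σ₃ = (∞ -h)(∞ h)`, so `σ₁σ₂σ₃ = σ₁ (∞ -h)(∞ h)` fuses the `2`-cycle `(-h 1+h)` of `σ₁`
with its fixed points `∞` and `h` into a `4`-cycle; put `σ₄ = (σ₁σ₂σ₃)⁻¹`. Transitivity holds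
because `σ₁σ₂` is the translation `j ↦ j + 1` and `σ₃` moves `∞` into `ZMod N`.
-/

open Equiv Equiv.Perm Finset

namespace Equiv.Perm

variable {α : Type*} [Fintype α] [DecidableEq α]

theorem cycleType_eq_replicate_of_sq_eq_one {σ : Perm α} (hσ : σ ^ 2 = 1) :
    σ.cycleType = Multiset.replicate (#σ.support / 2) 2 := by
  have hsum := σ.sum_cycleType
  rw [cycleType_of_pow_prime_eq_one hσ, Multiset.sum_replicate, smul_eq_mul] at hsum
  rw [cycleType_of_pow_prime_eq_one hσ, ← hsum, Nat.mul_div_cancel _ two_pos]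

theorem swap_mem_cycleFactorsFinset {σ : Perm α} {z : α} (hz : σ z ≠ z) (hz2 : σ (σ z) = z) :
    swap z (σ z) ∈ σ.cycleFactorsFinset := by
  refine mem_cycleFactorsFinset_iff.2 ⟨isCycle_swap hz.symm, fun a ha => ?_⟩
  rw [support_swap hz.symm, mem_insert, mem_singleton] at ha
  rcases ha with rfl | rfl
  · rw [swap_apply_left]
  · rw [swap_apply_right, hz2]

/-- Absorbing two fixed points `x`, `y` into a `2`-cycle `(z σz)` of `σ` turns it into the
`4`-cycle `(σz z x y)`. -/
theorem cycleType_mul_swap_mul_swap {σ : Perm α} {x y z : α} (hx : σ x = x) (hy : σ y = y)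
    (hxy : x ≠ y) (hz : σ z ≠ z) (hz2 : σ (σ z) = z) :
    (σ * swap x z * swap x y).cycleType = 4 ::ₘ σ.cycleType.erase 2 := by
  set w := σ * swap z (σ z)
  have hw : w.cycleType = σ.cycleType.erase 2 := by
    rw [show w = σ * (swap z (σ z))⁻¹ by rw [swap_inv],
      cycleType_mul_inv_mem_cycleFactorsFinset_eq_sub (swap_mem_cycleFactorsFinset hz hz2), (isCycle_swap hz.symm).cycleType,
      card_support_swap hz.symm, Multiset.sub_singleton]
  have hzx : z ≠ x := fun h => hz (h ▸ hx)
  have hzy : z ≠ y := fun h => hz (h ▸ hy)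
  have hσzx : σ z ≠ x := fun h => hzx (σ.injective (h.trans hx.symm))
  have hσzy : σ z ≠ y := fun h => hzy (σ.injective (h.trans hy.symm))
  set l := [σ z, z, x, y]
  have hl : l.Nodup := by simp [l, hz, hzx, hzy, hσzx, hσzy, hxy]
  have hc : l.formPerm.cycleType = {4} := by
    rw [(List.isCycle_formPerm hl (by simp [l])).cycleType,
      List.support_formPerm_of_nodup l hl (by simp [l]), List.toFinset_card_of_nodup hl]
    rfl
  have hdisj : w.Disjoint l.formPerm := by
    intro a
    by_cases ha : a ∈ l
    · left
      simp only [l, List.mem_cons, List.not_mem_nil, or_false] at ha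
      rcases ha with rfl | rfl | rfl | rfl
      · simp [w]
      · simp [w, hz2]
      · simp [w, swap_apply_of_ne_of_ne hzx.symm hσzx.symm, hx]
      · simp [w, swap_apply_of_ne_of_ne hzy.symm hσzy.symm, hy]
    · exact Or.inr (List.formPerm_apply_of_notMem ha)
  have hprod : σ * swap x z * swap x y = w * l.formPerm := by
    simp [w, l, List.formPerm_cons_cons, mul_assoc, swap_comm (σ z) z, swap_comm z x]
  rw [hprod, hdisj.cycleType_mul, hw, hc, add_comm, Multiset.singleton_add]

theorem cycleType_permCongr {β : Type*} [Fintype β] [DecidableEq β] (e : α ≃ β) (σ : Perm α) : (e.permCongr σ).cycleType = σ.cycleType := by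
  have : e.permCongr σ = σ.extendDomain (e.trans (subtypeUnivEquiv fun _ => trivial).symm) := by
    ext x
    simp [permCongr_apply, extendDomain_apply_subtype]
  rw [this, cycleType_extendDomain]

end Equiv.Perm

theorem exists_mem_apply_eq_of_forall_exists {α : Type*} {H : Subgroup (Perm α)} {x₀ : α}
    (h : ∀ b, ∃ g ∈ H, g x₀ = b) (a b : α) : ∃ g ∈ H, g a = b := by
  obtain ⟨g, hg, rfl⟩ := h a
  obtain ⟨k, hk, rfl⟩ := h b
  exact ⟨k * g⁻¹, mul_mem hk (inv_mem hg), by simp⟩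

theorem pow_val_sub_apply_some {N : ℕ} [NeZero N] {ρ : Perm (Option (ZMod N))}
    (hρ : ∀ j, ρ (some j) = some (j + 1)) (a b : ZMod N) :
    (ρ ^ (b - a).val) (some a) = some b := by
  have hpow : ∀ t : ℕ, (ρ ^ t) (some a) = some (a + t) := by
    intro t
    induction t with
    | zero => simp
    | succ t ih =>
      rw [pow_succ', Perm.mul_apply, ih, hρ]
      push_cast
      ring_nf
  rw [hpow, ZMod.natCast_zmod_val, add_sub_cancel]

theorem exists_mem_apply_eq_of_translation {N : ℕ} [NeZero N]
    {H : Subgroup (Perm (Option (ZMod N)))} {ρ τ : Perm (Option (ZMod N))} (hρH : ρ ∈ H)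
    (hτH : τ ∈ H) (hρ : ∀ j, ρ (some j) = some (j + 1)) {c : ZMod N} (hτ : τ none = some c)
    (a b : Option (ZMod N)) : ∃ g ∈ H, g a = b := by
  refine exists_mem_apply_eq_of_forall_exists (x₀ := none) (fun b => ?_) a b
  rcases b with _ | b
  · exact ⟨1, one_mem _, rfl⟩
  · refine ⟨ρ ^ (b - c).val * τ, mul_mem (pow_mem hρH _) hτH, ?_⟩
    rw [Perm.mul_apply, hτ, pow_val_sub_apply_some hρ]

section

variable {R : Type*} [CommRing R]

-- `none` plays the role of the point `∞` added to `R`.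
variable (R) in
def negPerm : Perm (Option R) := (Equiv.neg R).optionCongr

@[simp] theorem negPerm_none : negPerm R none = none := rfl

@[simp] theorem negPerm_some (j : R) : negPerm R (some j) = some (-j) := rfl

theorem negPerm_sq : negPerm R ^ 2 = 1 := by
  ext (_ | j) <;> simp [sq]

def reflectionAt (h : R) : Perm (Option R) :=
  (Equiv.addRight h).optionCongr * negPerm R * (Equiv.addRight h).optionCongr⁻¹

@[simp] theorem reflectionAt_none (h : R) : reflectionAt h none = none := rfl

theorem reflectionAt_some (h j : R) : reflectionAt h (some j) = some (2 * h - j) := by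
  simp only [reflectionAt, Perm.inv_def, ← optionCongr_symm, addRight_symm, Perm.mul_apply,
    optionCongr_apply, coe_addRight, Option.map_some, negPerm_some, neg_add_rev, neg_neg,
    Option.some.injEq]
  ring

theorem reflectionAt_mul_negPerm_some (h j : R) :
    (reflectionAt h * negPerm R) (some j) = some (j + 2 * h) := by
  rw [Perm.mul_apply, negPerm_some, reflectionAt_some]
  ring_nf

theorem neg_ne_self_of_two_mul_eq_one [Nontrivial R] {h : R} (hh : 2 * h = 1) : -h ≠ h := by
  intro e
  exact one_ne_zero (by linear_combination -hh - e)

variable [DecidableEq R]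

/-- `j ↦ -j` with its `2`-cycle `(h -h)` replaced by `(∞ -h)`. -/
def swappedNegPerm (h : R) : Perm (Option R) :=
  swap none (some h) * negPerm R * (swap none (some h))⁻¹

theorem support_negPerm [Fintype R] {h : R} (hh : 2 * h = 1) :
    (negPerm R).support = {none, some 0}ᶜ := by
  ext (_ | j)
  · simp
  · have : -j = j ↔ j = 0 :=
      ⟨fun hj => by linear_combination (-h) * hj - j * hh, fun hj => by simp [hj]⟩
    simp [this]

theorem cycleType_negPerm [Fintype R] {h : R} (hh : 2 * h = 1) :
    (negPerm R).cycleType = Multiset.replicate ((Fintype.card R - 1) / 2) 2 := by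
  rw [cycleType_eq_replicate_of_sq_eq_one negPerm_sq, support_negPerm hh, card_compl,
    card_pair (by simp), Fintype.card_option]
  rfl

theorem negPerm_mul_swappedNegPerm (h : R) :
    negPerm R * swappedNegPerm h = swap none (some (-h)) * swap none (some h) := by
  have hinv : (negPerm R)⁻¹ = negPerm R := inv_eq_of_mul_eq_one_left (by rw [← sq, negPerm_sq])
  rw [show swap none (some (-h)) = swap (negPerm R none) (negPerm R (some h)) from rfl,
    swap_apply_apply, hinv, swappedNegPerm, swap_inv]
  simp only [mul_assoc]

theorem cycleType_reflectionAt [Fintype R] {h : R} (hh : 2 * h = 1) :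
    (reflectionAt h).cycleType = Multiset.replicate ((Fintype.card R - 1) / 2) 2 := by
  rw [reflectionAt, cycleType_conj, cycleType_negPerm hh]

theorem cycleType_swappedNegPerm [Fintype R] {h : R} (hh : 2 * h = 1) :
    (swappedNegPerm h).cycleType = Multiset.replicate ((Fintype.card R - 1) / 2) 2 := by
  rw [swappedNegPerm, cycleType_conj, cycleType_negPerm hh]

theorem swappedNegPerm_none [Nontrivial R] {h : R} (hh : 2 * h = 1) :
    swappedNegPerm h none = some (-h) := by
  rw [swappedNegPerm, swap_inv, Perm.mul_apply, Perm.mul_apply, swap_apply_left, negPerm_some,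
    swap_apply_of_ne_of_ne (Option.some_ne_none _)
      (Option.some_injective _ |>.ne (neg_ne_self_of_two_mul_eq_one hh))]

theorem cycleType_reflectionAt_mul_negPerm_mul_swappedNegPerm [Fintype R] [Nontrivial R] {h : R}
    (hh : 2 * h = 1) : (reflectionAt h * negPerm R * swappedNegPerm h).cycleType =
      4 ::ₘ (Multiset.replicate ((Fintype.card R - 1) / 2) 2).erase 2 := by
  have hsq : reflectionAt h * reflectionAt h = 1 := by
    rw [← sq, reflectionAt, conj_pow, negPerm_sq, mul_one, mul_inv_cancel]
  have hfix : reflectionAt h (some h) = some h := by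
    rw [reflectionAt_some]
    ring_nf
  have hmove : reflectionAt h (some (-h)) ≠ some (-h) := by
    rw [reflectionAt_some, Ne, Option.some.injEq]
    intro e
    exact one_ne_zero (by linear_combination h * e - (2 * h + 1) * hh)
  rw [mul_assoc, negPerm_mul_swappedNegPerm, ← mul_assoc,
    cycleType_mul_swap_mul_swap (reflectionAt_none h) hfix (Option.some_ne_none h).symm hmove
      (by rw [← Perm.mul_apply, hsq, Perm.one_apply]), cycleType_reflectionAt hh]

end

/-- By the Riemann existence theorem, the monodromy of a connected cover of `P¹` branched over
four points with ramification types `C₁, …, C₄`. -/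
def IsHurwitzTuple {α : Type*} [Fintype α] [DecidableEq α] (C₁ C₂ C₃ C₄ : Multiset ℕ)
    (σ₁ σ₂ σ₃ σ₄ : Perm α) : Prop :=
  σ₁.cycleType = C₁ ∧ σ₂.cycleType = C₂ ∧ σ₃.cycleType = C₃ ∧ σ₄.cycleType = C₄ ∧
    σ₁ * σ₂ * σ₃ * σ₄ = 1 ∧
    ∀ a b : α, ∃ g ∈ Subgroup.closure ({σ₁, σ₂, σ₃, σ₄} : Set (Perm α)), g a = b

theorem IsHurwitzTuple.permCongr {α β : Type*} [Fintype α] [DecidableEq α] [Fintype β]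
    [DecidableEq β] {C₁ C₂ C₃ C₄ : Multiset ℕ} {σ₁ σ₂ σ₃ σ₄ : Perm α}
    (hσ : IsHurwitzTuple C₁ C₂ C₃ C₄ σ₁ σ₂ σ₃ σ₄) (e : α ≃ β) :
    IsHurwitzTuple C₁ C₂ C₃ C₄ (e.permCongr σ₁) (e.permCongr σ₂) (e.permCongr σ₃)
      (e.permCongr σ₄) := by
  obtain ⟨h₁, h₂, h₃, h₄, hprod, htrans⟩ := hσ
  simp only [IsHurwitzTuple, cycleType_permCongr, h₁, h₂, h₃, h₄, true_and]
  refine ⟨?_, fun a b => ?_⟩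
  · simpa only [map_mul, map_one, permCongrHom_coe] using congrArg e.permCongrHom hprod
  · obtain ⟨g, hg, hgab⟩ := htrans (e.symm a) (e.symm b)
    refine ⟨e.permCongr g, ?_, by simp [hgab]⟩
    have := Subgroup.mem_map_of_mem e.permCongrHom.toMonoidHom hg
    simpa only [MonoidHom.map_closure, Set.image_insert_eq, Set.image_singleton,
      MulEquiv.coe_toMonoidHom, permCongrHom_coe] using this

theorem isHurwitzTuple_zmod (m : ℕ) {h : ZMod (2 * m + 3)} (hh : 2 * h = 1) :
    IsHurwitzTuple (Multiset.replicate (m + 1) 2) (Multiset.replicate (m + 1) 2)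
      (Multiset.replicate (m + 1) 2) (4 ::ₘ Multiset.replicate m 2)
      (reflectionAt h) (negPerm _) (swappedNegPerm h)
      (reflectionAt h * negPerm _ * swappedNegPerm h)⁻¹ := by
  have : Fact (1 < 2 * m + 3) := ⟨by omega⟩
  have hcard : (Fintype.card (ZMod (2 * m + 3)) - 1) / 2 = m + 1 := by rw [ZMod.card]; omega
  refine ⟨?_, ?_, ?_, ?_, mul_inv_cancel _, ?_⟩
  · rw [cycleType_reflectionAt hh, hcard]
  · rw [cycleType_negPerm hh, hcard]
  · rw [cycleType_swappedNegPerm hh, hcard]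
  · rw [cycleType_inv, cycleType_reflectionAt_mul_negPerm_mul_swappedNegPerm hh, hcard,
      Multiset.replicate_succ, Multiset.erase_cons_head]
  · exact exists_mem_apply_eq_of_translation (ρ := reflectionAt h * negPerm _)
      (mul_mem (Subgroup.subset_closure (by simp)) (Subgroup.subset_closure (by simp)))
      (Subgroup.subset_closure (by simp)) (fun j => by rw [reflectionAt_mul_negPerm_some, hh])
      (swappedNegPerm_none hh)

/-- Type I degeneration 3 for even `n ≥ 6`:
cycle types `(2^((n-2)/2), 2^((n-2)/2), 2^((n-2)/2), (4)(2)^((n-4)/2))`,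
product one, generating a transitive subgroup of `Sₙ`. -/
theorem stmt_13 (n : ℕ) (hn : Even n) (hn6 : 6 ≤ n) :
    ∃ σ₁ σ₂ σ₃ σ₄ : Equiv.Perm (Fin n),
      σ₁.cycleType = Multiset.replicate ((n - 2) / 2) 2 ∧
      σ₂.cycleType = Multiset.replicate ((n - 2) / 2) 2 ∧
      σ₃.cycleType = Multiset.replicate ((n - 2) / 2) 2 ∧
      σ₄.cycleType = 4 ::ₘ Multiset.replicate ((n - 4) / 2) 2 ∧
      σ₁ * σ₂ * σ₃ * σ₄ = 1 ∧
      ∀ a b : Fin n,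
        ∃ g ∈ Subgroup.closure ({σ₁, σ₂, σ₃, σ₄} : Set (Equiv.Perm (Fin n))), g a = b := by
  obtain ⟨m, rfl⟩ : ∃ m, n = 2 * m + 4 := by
    obtain ⟨r, hr⟩ := hn
    exact ⟨r - 2, by omega⟩
  have hh : 2 * ((m + 2 : ℕ) : ZMod (2 * m + 3)) = 1 := by
    have := ZMod.natCast_self (2 * m + 3)
    push_cast at this ⊢
    linear_combination this
  rw [show (2 * m + 4 - 2) / 2 = m + 1 by omega, show (2 * m + 4 - 4) / 2 = m by omega]
  exact ⟨_, _, _, _, (isHurwitzTuple_zmod m hh).permCongr (Fintype.equivFinOfCardEq (by simp))⟩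
end
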